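/- (2-row k-column formulas) Let C be a nonempty (n,d,w) constant-weight code of size M, with d even and d < 2w ≤ n, and with distance distribution {A_{2i}}_{i=d/2}^{w}. For each k = 1, 2, …, M, write M · P_k^−(n;w) = q_k · C(n,k) + r_k with 0 ≤ r_k < C(n,k). Then: (1) Σ_{i=d/2}^{w} P_k^−(n; 2i) · A_{2i} ≤ (2/M)·[ (C(n,k) − r_k)·q_k·(M − q_k) + r_k·(q_k + 1)·(M − q_k − 1) ]; and (2) −Σ_{i=d/2}^{w} P_k^+(n; 2i) · A_{2i} ≤ (2/M)·[ (C(n,k) − r_k)·q_k·(M − q_k) + r_k·(q_k + 1)·(M − q_k − 1) ] − (M−1)·C(n,k). -/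

import Mathlib

/-!
For a `k`-set `K` of coordinates let `m_K` be the number of codewords of odd weight on `K`.
Double counting gives `∑_K m_K = M · P⁻_k(n;w)`, and since `K` meets the support of `c + c'`
in an odd number of points iff exactly one of `c, c'` is odd on `K`, also
`∑_{c,c'} P⁻_k(n; d(c,c')) = ∑_K 2 m_K (M - m_K)`, where the left side is
`M · ∑_i P⁻_k(n;2i) A_{2i}`. On integers `m (M - m)` lies below its chord through `q_k` and
`q_k + 1`, so under the constraint on `∑_K m_K` the right side is at most the bound of (1).
Part (2) follows from `P⁺_k(n;x) = C(n,k) - P⁻_k(n;x)` and `∑_i A_{2i} ≥ M - 1`.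
-/

/-- The number of ones of a binary vector. -/
def wtOnes {n : ℕ} (u : Fin n → ZMod 2) : ℕ :=
  (Finset.univ.filter (fun t => u t = 1)).card

/-- `C` is an `(n,d,w)` constant-weight binary code. -/
def IsCWCode (n d w : ℕ) (C : Finset (Fin n → ZMod 2)) : Prop :=
  (∀ c ∈ C, wtOnes c = w) ∧
  ∀ u ∈ C, ∀ v ∈ C, u ≠ v → d ≤ hammingDist u v

/-- `A n d w`: the largest possible size of an `(n,d,w)` constant-weight code. -/
noncomputable def A (n d w : ℕ) : ℕ :=
  sSup {M | ∃ C : Finset (Fin n → ZMod 2), IsCWCode n d w C ∧ C.card = M}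

/-- `C` is a `(w1,n1,w2,n2,d)` doubly-constant-weight binary code. -/
def IsDCWCode (w1 n1 w2 n2 d : ℕ) (C : Finset (Fin n1 ⊕ Fin n2 → ZMod 2)) : Prop :=
  (∀ c ∈ C,
    (Finset.univ.filter (fun t : Fin n1 => c (Sum.inl t) = 1)).card = w1 ∧
    (Finset.univ.filter (fun t : Fin n2 => c (Sum.inr t) = 1)).card = w2) ∧
  ∀ u ∈ C, ∀ v ∈ C, u ≠ v → d ≤ hammingDist u v

/-- `T w1 n1 w2 n2 d`: the largest possible size of a `(w1,n1,w2,n2,d)`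
doubly-constant-weight code. -/
noncomputable def T (w1 n1 w2 n2 d : ℕ) : ℕ :=
  sSup {M | ∃ C : Finset (Fin n1 ⊕ Fin n2 → ZMod 2), IsDCWCode w1 n1 w2 n2 d C ∧ C.card = M}

/-- `S_i(c)`: the set of codewords of `C` at distance `i` from `c`. -/
def Sdist {n : ℕ} (C : Finset (Fin n → ZMod 2)) (c : Fin n → ZMod 2) (i : ℕ) :
    Finset (Fin n → ZMod 2) :=
  C.filter (fun u => hammingDist u c = i)

/-- The distance distribution `A_i = (1/|C|) ∑_{c ∈ C} |S_i(c)|` of a code `C`. -/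
noncomputable def distDistr {n : ℕ} (C : Finset (Fin n → ZMod 2)) (i : ℕ) : ℚ :=
  (∑ c ∈ C, ((Sdist C c i).card : ℚ)) / (C.card : ℚ)

/-- `V_i`: vectors of `F^n` with exactly `i` ones on the first `w` coordinates and
exactly `i` ones on the last `n - w` coordinates. -/
def Vset (n w i : ℕ) : Finset (Fin n → ZMod 2) :=
  Finset.univ.filter (fun u =>
    (Finset.univ.filter (fun t : Fin n => t.val < w ∧ u t = 1)).card = i ∧
    (Finset.univ.filter (fun t : Fin n => w ≤ t.val ∧ u t = 1)).card = i)

/-- `m_{i,j} = max { d(u,v) : u ∈ V_i, v ∈ V_j }`. -/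
def mMax (n w i j : ℕ) : ℕ :=
  ((Vset n w i) ×ˢ (Vset n w j)).sup fun p => hammingDist p.1 p.2

/-- `P⁻_k(n;x) = ∑_{j odd} C(x,j) C(n-x,k-j)`. -/
def Pminus (k n x : ℕ) : ℕ :=
  ∑ j ∈ Finset.range (k + 1), if Odd j then x.choose j * (n - x).choose (k - j) else 0

/-- `P⁺_k(n;x) = ∑_{j even} C(x,j) C(n-x,k-j)`. -/
def Pplus (k n x : ℕ) : ℕ :=
  ∑ j ∈ Finset.range (k + 1), if Even j then x.choose j * (n - x).choose (k - j) else 0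

/-- The Krawtchouk polynomial `P_k(n;x) = ∑_j (-1)^j C(x,j) C(n-x,k-j)` at integer points. -/
def Kraw (k n x : ℕ) : ℤ :=
  ∑ j ∈ Finset.range (k + 1), (-1 : ℤ) ^ j * x.choose j * (n - x).choose (k - j)

open Finset
open scoped symmDiff

section FiniteSets

variable {α : Type*} [DecidableEq α]

theorem card_symmDiff_add_two_mul_card_inter (s t : Finset α) :
    #(s ∆ t) + 2 * #(s ∩ t) = #s + #t := by
  have hs := card_sdiff_add_card_inter s t
  have ht := card_sdiff_add_card_inter t s
  rw [inter_comm] at ht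
  rw [symmDiff_def, sup_eq_union, card_union_of_disjoint disjoint_sdiff_sdiff]
  omega

theorem odd_card_inter_symmDiff_iff (K s t : Finset α) :
    Odd #(K ∩ s ∆ t) ↔ ¬(Odd #(K ∩ s) ↔ Odd #(K ∩ t)) := by
  have h := card_symmDiff_add_two_mul_card_inter (K ∩ s) (K ∩ t)
  rw [← show K ∩ s ∆ t = (K ∩ s) ∆ (K ∩ t) from inf_symmDiff_distrib_left K s t] at h
  simp only [Nat.odd_iff]
  omega

variable [Fintype α]

theorem card_powersetCard_filter_card_inter_eq {k j : ℕ} (hj : j ≤ k) (S : Finset α) :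
    #{K ∈ powersetCard k univ | #(K ∩ S) = j}
      = (#S).choose j * (Fintype.card α - #S).choose (k - j) := by
  rw [← card_compl, ← card_powersetCard, ← card_powersetCard, ← card_product]
  have hsplit {X Y : Finset α} (hX : X ⊆ S) (hY : Y ⊆ Sᶜ) :
      (X ∪ Y) ∩ S = X ∧ (X ∪ Y) \ S = Y := by
    constructor <;> ext x <;> grind [mem_compl]
  refine card_bij' (fun K _ => (K ∩ S, K \ S)) (fun p _ => p.1 ∪ p.2) ?_ ?_ ?_ ?_
  · intro K hK
    simp only [mem_filter, mem_powersetCard_univ] at hK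
    have := card_sdiff_add_card_inter K S
    simp only [mem_product, mem_powersetCard, inter_subset_right, true_and,
      subset_compl_iff_disjoint_right, sdiff_disjoint]
    omega
  · rintro ⟨X, Y⟩ hp
    simp only [mem_product, mem_powersetCard] at hp
    have hXY : Disjoint X Y :=
      disjoint_of_subset_left hp.1.1 (subset_compl_iff_disjoint_right.mp hp.2.1).symm
    simp only [mem_filter, mem_powersetCard_univ, card_union_of_disjoint hXY,
      (hsplit hp.1.1 hp.2.1).1]
    omega
  · intro K _
    exact (union_comm _ _).trans (sdiff_union_inter K S)
  · rintro ⟨X, Y⟩ hp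
    simp only [mem_product, mem_powersetCard] at hp
    obtain ⟨hXS, hYS⟩ := hsplit hp.1.1 hp.2.1
    rw [hXS, hYS]

theorem card_powersetCard_filter_odd_card_inter (k : ℕ) (S : Finset α) :
    #{K ∈ powersetCard k univ | Odd #(K ∩ S)} = Pminus k (Fintype.card α) #S := by
  have hmaps : (({K ∈ powersetCard k univ | Odd #(K ∩ S)} : Finset _) : Set (Finset α)).MapsTo
      (fun K => #(K ∩ S)) (range (k + 1)) := by
    intro K hK
    simp only [coe_filter, mem_powersetCard_univ, Set.mem_ofPred_eq] at hK
    simpa [Nat.lt_succ_iff, ← hK.1] using card_le_card inter_subset_left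
  rw [card_eq_sum_card_fiberwise hmaps, Pminus]
  refine sum_congr rfl fun j hj => ?_
  rw [filter_filter]
  split_ifs with hodd
  · rw [← card_powersetCard_filter_card_inter_eq (Nat.lt_succ_iff.mp (mem_range.mp hj))]
    exact congrArg card (filter_congr fun K _ => by grind)
  · exact card_eq_zero.mpr (filter_false_of_mem fun K _ => by grind)

end FiniteSets

theorem Pminus_zero (k n : ℕ) : Pminus k n 0 = 0 :=
  sum_eq_zero fun j _ => by
    split_ifs with h
    · rw [Nat.choose_eq_zero_of_lt h.pos, zero_mul]
    · rfl

theorem Pplus_add_Pminus (k : ℕ) {n x : ℕ} (hx : x ≤ n) :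
    Pplus k n x + Pminus k n x = n.choose k := by
  rw [Pplus, Pminus, ← sum_add_distrib]
  have hsplit (j : ℕ) : ((if Even j then x.choose j * (n - x).choose (k - j) else 0)
      + if Odd j then x.choose j * (n - x).choose (k - j) else 0)
      = x.choose j * (n - x).choose (k - j) := by
    rcases Nat.even_or_odd j with h | h <;> simp [h, Nat.not_odd_iff_even, Nat.not_even_iff_odd]
  simp only [hsplit]
  rw [← Nat.sum_antidiagonal_eq_sum_range_succ_mk (fun ij => x.choose ij.1 * (n - x).choose ij.2),
    ← Nat.add_choose_eq, Nat.add_sub_cancel' hx]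

theorem card_filter_product_not_iff {β : Type*} [DecidableEq β] (C : Finset β) (p : β → Prop)
    [DecidablePred p] :
    #{x ∈ C ×ˢ C | ¬(p x.1 ↔ p x.2)} = 2 * (#{c ∈ C | p c} * #{c ∈ C | ¬p c}) := by
  have hsplit : {x ∈ C ×ˢ C | ¬(p x.1 ↔ p x.2)}
      = {c ∈ C | p c} ×ˢ {c ∈ C | ¬p c} ∪ {c ∈ C | ¬p c} ×ˢ {c ∈ C | p c} := by
    ext ⟨c, c'⟩
    simp only [mem_filter, mem_product, mem_union]
    tauto
  have hdisj : Disjoint ({c ∈ C | p c} ×ˢ {c ∈ C | ¬p c}) ({c ∈ C | ¬p c} ×ˢ {c ∈ C | p c}) :=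
    disjoint_product.mpr (Or.inl (disjoint_filter_filter_not _ _ _))
  rw [hsplit, card_union_of_disjoint hdisj, card_product, card_product]
  ring

section DoubleCounting

variable {α β : Type*} [DecidableEq α]

def oddInterCount (C : Finset β) (A : β → Finset α) (K : Finset α) : ℕ :=
  #{c ∈ C | Odd #(K ∩ A c)}

theorem oddInterCount_le_card (C : Finset β) (A : β → Finset α) (K : Finset α) :
    oddInterCount C A K ≤ #C :=
  card_filter_le _ _

variable [Fintype α]

theorem sum_oddInterCount (C : Finset β) (A : β → Finset α) (k : ℕ) :
    ∑ K ∈ powersetCard k univ, oddInterCount C A K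
      = ∑ c ∈ C, Pminus k (Fintype.card α) #(A c) := by
  simp only [oddInterCount, ← card_powersetCard_filter_odd_card_inter]
  exact sum_card_bipartiteAbove_eq_sum_card_bipartiteBelow (fun K c => Odd #(K ∩ A c))

theorem sum_sum_Pminus_card_symmDiff [DecidableEq β] (C : Finset β) (A : β → Finset α) (k : ℕ) :
    ∑ c ∈ C, ∑ c' ∈ C, Pminus k (Fintype.card α) #(A c ∆ A c')
      = ∑ K ∈ powersetCard k univ, 2 * (oddInterCount C A K * (#C - oddInterCount C A K)) := by
  simp only [← card_powersetCard_filter_odd_card_inter]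
  rw [← sum_product' (f := fun c c' => #{K ∈ powersetCard k univ | Odd #(K ∩ A c ∆ A c')})]
  have hswap := sum_card_bipartiteAbove_eq_sum_card_bipartiteBelow (s := C ×ˢ C)
    (t := powersetCard k univ) (fun x K => Odd #(K ∩ A x.1 ∆ A x.2))
  simp only [bipartiteAbove, bipartiteBelow] at hswap
  rw [hswap]
  refine sum_congr rfl fun K _ => ?_
  simp only [odd_card_inter_symmDiff_iff, oddInterCount]
  rw [card_filter_product_not_iff C (fun c => Odd #(K ∩ A c)),
    ← card_filter_add_card_filter_not (s := C) (fun c => Odd #(K ∩ A c)), Nat.add_sub_cancel_left]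

end DoubleCounting

theorem sum_mul_sub_le_of_sum_eq {ι : Type*} (s : Finset ι) (m : ι → ℤ) {M q r : ℤ}
    (hsum : ∑ i ∈ s, m i = q * #s + r) :
    ∑ i ∈ s, m i * (M - m i) ≤ (#s - r) * q * (M - q) + r * (q + 1) * (M - q - 1) := by
  have hchord (x : ℤ) : x * (M - x) ≤ q * (M - q) + (x - q) * (M - 2 * q - 1) := by
    have : 0 ≤ (x - q) * (x - q - 1) := by
      rcases le_or_gt x q with h | h
      · exact mul_nonneg_of_nonpos_of_nonpos (by omega) (by omega)
      · exact mul_nonneg (by omega) (by omega)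
    linarith
  calc ∑ i ∈ s, m i * (M - m i)
      ≤ ∑ i ∈ s, (q * (M - q) + (m i - q) * (M - 2 * q - 1)) :=
        sum_le_sum fun i _ => hchord (m i)
    _ = _ := by
      simp only [sum_add_distrib, ← sum_mul, sum_sub_distrib, hsum, sum_const, nsmul_eq_mul]
      ring
section BinaryCodes

variable {n : ℕ}

def ones (u : Fin n → ZMod 2) : Finset (Fin n) := {t | u t = 1}

theorem card_ones (u : Fin n → ZMod 2) : #(ones u) = wtOnes u := rfl

theorem hammingDist_eq_card_symmDiff_ones (u v : Fin n → ZMod 2) :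
    hammingDist u v = #(ones u ∆ ones v) := by
  have hxor : ∀ a b : ZMod 2, a ≠ b ↔ ¬(a = 1 ↔ b = 1) := by decide
  simp only [hammingDist, ones, hxor]
  congr 1
  ext t
  simp only [mem_filter, mem_univ, true_and, mem_symmDiff]
  tauto

theorem hammingDist_add_two_mul_card_inter_ones {w : ℕ} {u v : Fin n → ZMod 2}
    (hu : wtOnes u = w) (hv : wtOnes v = w) :
    hammingDist u v + 2 * #(ones u ∩ ones v) = 2 * w := by
  rw [hammingDist_eq_card_symmDiff_ones, card_symmDiff_add_two_mul_card_inter]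
  exact (congrArg₂ (· + ·) hu hv).trans (two_mul w).symm

variable {d w : ℕ} {C : Finset (Fin n → ZMod 2)}

theorem IsCWCode.exists_hammingDist_eq_two_mul (hcode : IsCWCode n d w C) {u v : Fin n → ZMod 2}
    (hu : u ∈ C) (hv : v ∈ C) (huv : u ≠ v) :
    ∃ i ∈ Icc (d / 2) w, hammingDist u v = 2 * i := by
  have hsum := hammingDist_add_two_mul_card_inter_ones (hcode.1 u hu) (hcode.1 v hv)
  have hd := hcode.2 u hu v hv huv
  exact ⟨hammingDist u v / 2, mem_Icc.mpr ⟨by omega, by omega⟩, by omega⟩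

theorem IsCWCode.sum_mul_card_Sdist (hcode : IsCWCode n d w C) {f : ℕ → ℚ} (hf : f 0 = 0)
    {c : Fin n → ZMod 2} (hc : c ∈ C) :
    ∑ i ∈ Icc (d / 2) w, f (2 * i) * #(Sdist C c (2 * i)) = ∑ c' ∈ C, f (hammingDist c c') := by
  simp only [Sdist, hammingDist_comm _ c, card_eq_sum_ones, Nat.cast_sum, mul_sum, sum_filter]
  rw [sum_comm]
  refine sum_congr rfl fun c' hc' => ?_
  by_cases hcc : c = c'
  · subst hcc
    simp [hf]
  · obtain ⟨j, hj, hdist⟩ := hcode.exists_hammingDist_eq_two_mul hc hc' hcc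
    simp [hdist, hj]

theorem IsCWCode.sum_mul_distDistr (hcode : IsCWCode n d w C) {f : ℕ → ℚ} (hf : f 0 = 0) :
    ∑ i ∈ Icc (d / 2) w, f (2 * i) * distDistr C (2 * i)
      = (∑ c ∈ C, ∑ c' ∈ C, f (hammingDist c c')) / #C := by
  simp only [distDistr, mul_div_assoc', ← sum_div, mul_sum]
  rw [sum_comm]
  congr 1
  exact sum_congr rfl fun c hc => hcode.sum_mul_card_Sdist hf hc

theorem IsCWCode.card_sub_one_le_sum_card_Sdist (hcode : IsCWCode n d w C)
    {c : Fin n → ZMod 2} (hc : c ∈ C) :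
    #C - 1 ≤ ∑ i ∈ Icc (d / 2) w, #(Sdist C c (2 * i)) := by
  rw [← card_erase_of_mem hc]
  refine (card_le_card fun c' hc' => ?_).trans card_biUnion_le
  obtain ⟨hne, hc'⟩ := mem_erase.mp hc'
  obtain ⟨i, hi, hdist⟩ := hcode.exists_hammingDist_eq_two_mul hc' hc hne
  exact mem_biUnion.mpr ⟨i, hi, mem_filter.mpr ⟨hc', hdist⟩⟩

theorem IsCWCode.card_sub_one_le_sum_distDistr (hcode : IsCWCode n d w C) (hC : C.Nonempty) :
    (#C : ℚ) - 1 ≤ ∑ i ∈ Icc (d / 2) w, distDistr C (2 * i) := by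
  simp only [distDistr, ← sum_div]
  rw [le_div_iff₀ (by exact_mod_cast hC.card_pos), sum_comm, mul_comm, ← Nat.cast_pred hC.card_pos,
    ← nsmul_eq_mul, ← sum_const]
  exact_mod_cast sum_le_sum fun c hc => hcode.card_sub_one_le_sum_card_Sdist hc

theorem sum_sum_Pminus_hammingDist_le {w k q r : ℕ} (hw : ∀ c ∈ C, wtOnes c = w)
    (hqr : #C * Pminus k n w = q * n.choose k + r) :
    ∑ c ∈ C, ∑ c' ∈ C, (Pminus k n (hammingDist c c') : ℤ)
      ≤ 2 * ((n.choose k - r) * q * (#C - q) + r * (q + 1) * (#C - q - 1)) := by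
  set m := oddInterCount C ones
  have hsum : ∑ K ∈ powersetCard k univ, m K = #C * Pminus k n w := by
    rw [sum_oddInterCount, Fintype.card_fin, ← smul_eq_mul, ← sum_const]
    exact sum_congr rfl fun c hc => by rw [card_ones, hw c hc]
  have hsumZ : ∑ K ∈ powersetCard k univ, (m K : ℤ)
      = q * #(powersetCard k (univ : Finset (Fin n))) + r := by
    rw [card_powersetCard, card_univ, Fintype.card_fin]
    exact_mod_cast hsum.trans hqr
  have hpairs := sum_sum_Pminus_card_symmDiff C ones k
  simp only [Fintype.card_fin, ← hammingDist_eq_card_symmDiff_ones] at hpairs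
  have hpairsZ : ∑ c ∈ C, ∑ c' ∈ C, (Pminus k n (hammingDist c c') : ℤ)
      = 2 * ∑ K ∈ powersetCard k univ, (m K : ℤ) * (#C - m K) := by
    have := congrArg (Nat.cast : ℕ → ℤ) hpairs
    push_cast [Nat.cast_sub, oddInterCount_le_card] at this
    rw [this, mul_sum]
  rw [hpairsZ]
  have := sum_mul_sub_le_of_sum_eq (M := #C) _ _ hsumZ
  rw [card_powersetCard, card_univ, Fintype.card_fin] at this
  linarith

end BinaryCodes

theorem two_row_k_column_general (n d w : ℕ) (C : Finset (Fin n → ZMod 2)) (hC : C.Nonempty)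
    (hcode : IsCWCode n d w C) (hwn : 2 * w ≤ n)
    (k : ℕ) (qk rk : ℕ) (hqr : C.card * Pminus k n w = qk * n.choose k + rk) :
    (∑ i ∈ Finset.Icc (d / 2) w, (Pminus k n (2 * i) : ℚ) * distDistr C (2 * i)
      ≤ (2 / (C.card : ℚ)) *
          (((n.choose k : ℚ) - (rk : ℚ)) * (qk : ℚ) * ((C.card : ℚ) - (qk : ℚ)) +
            (rk : ℚ) * ((qk : ℚ) + 1) * ((C.card : ℚ) - (qk : ℚ) - 1))) ∧
    (-(∑ i ∈ Finset.Icc (d / 2) w, (Pplus k n (2 * i) : ℚ) * distDistr C (2 * i))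
      ≤ (2 / (C.card : ℚ)) *
          (((n.choose k : ℚ) - (rk : ℚ)) * (qk : ℚ) * ((C.card : ℚ) - (qk : ℚ)) +
            (rk : ℚ) * ((qk : ℚ) + 1) * ((C.card : ℚ) - (qk : ℚ) - 1)) -
          ((C.card : ℚ) - 1) * (n.choose k : ℚ)) := by
  have hpairs : ∑ c ∈ C, ∑ c' ∈ C, (Pminus k n (hammingDist c c') : ℚ)
      ≤ 2 * (((n.choose k : ℚ) - rk) * qk * (#C - qk) + rk * (qk + 1) * (#C - qk - 1)) := by
    exact_mod_cast sum_sum_Pminus_hammingDist_le hcode.1 hqr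
  have hPminus : ∑ i ∈ Icc (d / 2) w, (Pminus k n (2 * i) : ℚ) * distDistr C (2 * i)
      ≤ 2 / #C * (((n.choose k : ℚ) - rk) * qk * (#C - qk) + rk * (qk + 1) * (#C - qk - 1)) := by
    rw [hcode.sum_mul_distDistr (f := fun x => (Pminus k n x : ℚ)) (by simp [Pminus_zero]),
      div_mul_eq_mul_div]
    gcongr
  have hPplus : ∑ i ∈ Icc (d / 2) w, (Pplus k n (2 * i) : ℚ) * distDistr C (2 * i)
      = n.choose k * ∑ i ∈ Icc (d / 2) w, distDistr C (2 * i)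
        - ∑ i ∈ Icc (d / 2) w, (Pminus k n (2 * i) : ℚ) * distDistr C (2 * i) := by
    rw [mul_sum, ← sum_sub_distrib]
    refine sum_congr rfl fun i hi => ?_
    rw [← Pplus_add_Pminus k (by grind : 2 * i ≤ n)]
    push_cast
    ring
  have hdistr := mul_le_mul_of_nonneg_left (hcode.card_sub_one_le_sum_distDistr hC)
    (Nat.cast_nonneg (α := ℚ) (n.choose k))
  refine ⟨hPminus, ?_⟩
  rw [hPplus]
  linarith

/-- 2-row k-column formulas: For a nonempty `(n,d,w)` constant-weight
code `C` of size `M` (`d` even, `d < 2w ≤ n`) with distance distribution `{A_{2i}}`,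
each `k = 1,…,M`, and `M · P⁻_k(n;w) = q_k · C(n,k) + r_k` with `0 ≤ r_k < C(n,k)`,
the two inequalities hold. -/
theorem two_row_k_column (n d w : ℕ) (C : Finset (Fin n → ZMod 2)) (hC : C.Nonempty)
    (hcode : IsCWCode n d w C) (hd : Even d) (hdw : d < 2 * w) (hwn : 2 * w ≤ n)
    (k : ℕ) (hk1 : 1 ≤ k) (hk2 : k ≤ C.card)
    (qk rk : ℕ) (hqr : C.card * Pminus k n w = qk * n.choose k + rk)
    (hrk : rk < n.choose k) :
    (∑ i ∈ Finset.Icc (d / 2) w, (Pminus k n (2 * i) : ℚ) * distDistr C (2 * i)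
      ≤ (2 / (C.card : ℚ)) *
          (((n.choose k : ℚ) - (rk : ℚ)) * (qk : ℚ) * ((C.card : ℚ) - (qk : ℚ)) +
            (rk : ℚ) * ((qk : ℚ) + 1) * ((C.card : ℚ) - (qk : ℚ) - 1))) ∧
    (-(∑ i ∈ Finset.Icc (d / 2) w, (Pplus k n (2 * i) : ℚ) * distDistr C (2 * i))
      ≤ (2 / (C.card : ℚ)) *
          (((n.choose k : ℚ) - (rk : ℚ)) * (qk : ℚ) * ((C.card : ℚ) - (qk : ℚ)) +
            (rk : ℚ) * ((qk : ℚ) + 1) * ((C.card : ℚ) - (qk : ℚ) - 1)) -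
          ((C.card : ℚ) - 1) * (n.choose k : ℚ)) :=
  two_row_k_column_general n d w C hC hcode hwn k qk rk hqr
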